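/- CVI is contained in the backward slice: CVI(Υ) ⊆ P^B_Υ for every slicing criterion Υ = ⟨l, V⟩. -/
import Mathlib


/-!
Control flow graphs, paths, (strong/weak) post-dominance and (strong/weak)
transitive control dependence, following the paper's definitions.
-/

/-- Nonempty paths in a graph given by a successor relation. -/
inductive IsPath {Node : Type} (succ : Node → Node → Prop) : List Node → Prop
  | single (a : Node) : IsPath succ [a]
  | cons {a b : Node} {rest : List Node} :
      succ a b → IsPath succ (b :: rest) → IsPath succ (a :: b :: rest)

/-- `p` is a path from `x` to `y`. -/
def PathFromTo {Node : Type} (succ : Node → Node → Prop) (x y : Node)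
    (p : List Node) : Prop :=
  IsPath succ p ∧ p.head? = some x ∧ p.getLast? = some y

/-- An infinite path in the graph. -/
def InfPath {Node : Type} (succ : Node → Node → Prop) (f : ℕ → Node) : Prop :=
  ∀ i, succ (f i) (f (i + 1))

/-- A control flow graph: a successor relation, labeled outgoing edges of
conditional nodes (`cedge c b n` : the `b`-edge of condition `c` goes to `n`),
and distinguished `entry`, `exit` nodes. -/
structure CFG (Node : Type) where
  succ : Node → Node → Prop
  cedge : Node → Bool → Node → Prop
  entry : Node
  exit : Node
  cedge_succ : ∀ {c : Node} {b : Bool} {n : Node}, cedge c b n → succ c n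

namespace CFG

variable {Node : Type}

/-- `n` is a condition node: it has both a true- and a false-edge. -/
def IsCond (G : CFG Node) (c : Node) : Prop :=
  (∃ n, G.cedge c true n) ∧ ∃ m, G.cedge c false m

/-- `n2` (weakly) post-dominates `n1`: every path from `n1` to `EXIT`
contains `n2`. -/
def PostDom (G : CFG Node) (n2 n1 : Node) : Prop :=
  ∀ p, PathFromTo G.succ n1 G.exit p → n2 ∈ p

/-- Strict (weak) post-dominance. -/
def StrictPostDom (G : CFG Node) (n2 n1 : Node) : Prop :=
  n2 ≠ n1 ∧ G.PostDom n2 n1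

/-- `n2` strongly post-dominates `n1`: every infinite path starting at `n1`
contains `n2`. -/
def StrongPostDom (G : CFG Node) (n2 n1 : Node) : Prop :=
  ∀ f : ℕ → Node, InfPath G.succ f → f 0 = n1 → ∃ i, f i = n2

/-- Strict strong post-dominance. -/
def StrictStrongPostDom (G : CFG Node) (n2 n1 : Node) : Prop :=
  n2 ≠ n1 ∧ G.StrongPostDom n2 n1

/-- `n3` is strongly control dependent on the `b`-edge of condition `c`:
`n3` post-dominates the target of the edge but does not strictly
post-dominate `c`. -/
def SCDep (G : CFG Node) (n3 c : Node) (b : Bool) : Prop :=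
  ∃ n2, G.cedge c b n2 ∧ G.PostDom n3 n2 ∧ ¬ G.StrictPostDom n3 c

/-- `n3` is weakly control dependent on the `b`-edge of condition `c`:
`n3` strongly post-dominates the target of the edge but does not strictly
strongly post-dominate `c`. -/
def WCDep (G : CFG Node) (n3 c : Node) (b : Bool) : Prop :=
  ∃ n2, G.cedge c b n2 ∧ G.StrongPostDom n3 n2 ∧ ¬ G.StrictStrongPostDom n3 c

/-- `c →^b s`: strong transitive control dependence of `s` on `c`, via a chain
of strong control dependences whose first edge is the `b`-edge of `c`. -/
inductive STC (G : CFG Node) : Node → Bool → Node → Prop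
  | base {c : Node} {b : Bool} {s : Node} : G.SCDep s c b → G.STC c b s
  | step {c : Node} {b : Bool} {m : Node} {b' : Bool} {s : Node} :
      G.SCDep m c b → G.STC m b' s → G.STC c b s

/-- `c ⇝^b s`: (weak) transitive control dependence of `s` on `c`, via a chain
of weak or strong control dependences whose first edge is the `b`-edge of `c`. -/
inductive WTC (G : CFG Node) : Node → Bool → Node → Prop
  | base {c : Node} {b : Bool} {s : Node} :
      G.WCDep s c b ∨ G.SCDep s c b → G.WTC c b s
  | step {c : Node} {b : Bool} {m : Node} {b' : Bool} {s : Node} :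
      G.WCDep m c b ∨ G.SCDep m c b → G.WTC m b' s → G.WTC c b s

/-- `c → s` (without specified first edge). -/
def STrans (G : CFG Node) (c s : Node) : Prop := ∃ b, G.STC c b s

/-- `c ⇝ s` (without specified first edge). -/
def WTrans (G : CFG Node) (c s : Node) : Prop := ∃ b, G.WTC c b s

/-- The path `p` passes through the `b`-edge of condition `c`. -/
def PassesEdge (G : CFG Node) (c : Node) (b : Bool) (p : List Node) : Prop :=
  ∃ m, G.cedge c b m ∧ [c, m] <:+: p

end CFG

/-- Structuredness of a goto-less program's CFG: every node lies on a path to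
`EXIT`, all branching is via two-way conditionals, and loops are single-entry:
every cycle has a unique node with a predecessor outside the cycle. -/
def Structured {Node : Type} (G : CFG Node) : Prop :=
  (∀ n, ∃ p, PathFromTo G.succ n G.exit p) ∧
  (∀ c b n, G.cedge c b n → G.IsCond c) ∧
  (∀ p : List Node, IsPath G.succ p → 2 ≤ p.length → p.head? = p.getLast? →
    ∃! h, h ∈ p ∧ ∃ q, G.succ q h ∧ q ∉ p)

/-- `u` is the immediate post-dominator of `c`: `u` strictly post-dominates
`c`, and every node strictly post-dominating `c` post-dominates `u`. -/
def CFG.ImmPostDom {Node : Type} (G : CFG Node) (u c : Node) : Prop :=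
  G.StrictPostDom u c ∧ ∀ w, G.StrictPostDom w c → G.PostDom w u

/-- There is a loop-free (simple) path with `k` edges from `s` to `l`. -/
def SimplePathLen {Node : Type} (G : CFG Node) (s l : Node) (k : ℕ) : Prop :=
  ∃ p, PathFromTo G.succ s l p ∧ p.Nodup ∧ p.length = k + 1

/-- `MLP(s,l) = m`: the maximum length of a loop-free path from `s` to `l`
(in particular `MLP(s,s) = 0`). -/
def IsMLP {Node : Type} (G : CFG Node) (s l : Node) (m : ℕ) : Prop :=
  SimplePathLen G s l m ∧ ∀ k, SimplePathLen G s l k → k ≤ m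

/-- A program: a CFG together with statement-kind and variable information.
`isAssign s` says `s` is an assignment; `refs s` and `defs s` are the
variables referenced, respectively defined, at `s`. -/
structure Prog (Node Var : Type) where
  G : CFG Node
  isAssign : Node → Prop
  refs : Node → Set Var
  defs : Node → Set Var

namespace Prog

variable {Node Var : Type}

/-- `s` is a reaching definition of variable `v` at node `t`: `s` is an
assignment defining `v` and some control-flow path from `s` to `t` contains
no other definition of `v`. -/
def RD (P : Prog Node Var) (s : Node) (v : Var) (t : Node) : Prop :=
  P.isAssign s ∧ v ∈ P.defs s ∧
  ∃ p, PathFromTo P.G.succ s t p ∧ ∀ m ∈ p, m ≠ s → m ≠ t → v ∉ P.defs m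

/-- `s ∈ DU(t, X)`: `s` is a reaching definition at `t` of some variable in
`X`.  `DU` of a slicing criterion `⟨l, V⟩` is `P.DU l V`, and `DU(LV(t))` is
`P.DU t (P.refs t)`. -/
def DU (P : Prog Node Var) (t : Node) (X : Set Var) (s : Node) : Prop :=
  ∃ v ∈ X, P.RD s v t

end Prog

/-- `t` is the first element satisfying `S` along the path `p`. -/
def FirstOn {Node : Type} (S : Node → Prop) (p : List Node) (t : Node) : Prop :=
  ∃ p1 p2, p = p1 ++ t :: p2 ∧ S t ∧ ∀ x ∈ p1, ¬ S x

/-- A potential witness `⟨π1, π2, t⟩` for a value-impacting condition,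
together with the starting edges `e1`, `e2` of the two paths. -/
structure Witness (Node : Type) where
  π1 : List Node
  π2 : List Node
  t : Node
  e1 : Bool
  e2 : Bool

/-- `w` is a witness in `WVI(c, Υ)` (relative to the value-impact predicate
`VIp`): `π1`, `π2` are paths from the two distinct edges `e1`, `e2` of `c` to
`l`, `t` is value-impacting, `t` is the first value-impacting statement along
`π1`, and `t` is not the first value-impacting statement along `π2`. -/
def IsWitness {Node Var : Type} (P : Prog Node Var) (l : Node)
    (VIp : Node → Prop) (c : Node) (w : Witness Node) : Prop :=
  w.e1 ≠ w.e2 ∧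
  (∃ n1, P.G.cedge c w.e1 n1 ∧ PathFromTo P.G.succ n1 l w.π1) ∧
  (∃ n2, P.G.cedge c w.e2 n2 ∧ PathFromTo P.G.succ n2 l w.π2) ∧
  VIp w.t ∧ FirstOn VIp w.π1 w.t ∧ ¬ FirstOn VIp w.π2 w.t

/-- The defining clauses (rules (1)–(4)) of value-impacting statements for the
slicing criterion `Υ = ⟨l, V⟩`, relative to a predicate `VIp`:
(1) the augmented SKIP statement at `l`; (2) assignments in `DU(Υ)`;
(3) assignments in `DU(LV(t))` for value-impacting `t`; (4) conditions with a
witness. -/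
def VIClause {Node Var : Type} (P : Prog Node Var) (l : Node) (V : Set Var)
    (VIp : Node → Prop) (s : Node) : Prop :=
  s = l ∨
  (P.isAssign s ∧ P.DU l V s) ∨
  (P.isAssign s ∧ ∃ t, VIp t ∧ P.DU t (P.refs t) s) ∨
  (P.G.IsCond s ∧ ∃ w, IsWitness P l VIp s w)

/-- The computed value-impacting set `CVI(Υ)` for `Υ = ⟨l, V⟩`, defined
inductively: (1) the augmented SKIP statement at `l`; (2) assignments in
`DU(Υ)`; (3) assignments in `DU(LV(t))` for `t ∈ CVI(Υ)`; (4) conditions `c`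
(with edges `e1 ≠ e2`) for which there is `t ∈ CVI(Υ)` with either
`c → t ∧ ¬(c → l)` or `c →^{e1} l ∧ ¬(c →^{e1} t) ∧ c ⇝^{e2} t`. -/
inductive CVI {Node Var : Type} (P : Prog Node Var) (l : Node) (V : Set Var) :
    Node → Prop
  | skip : CVI P l V l
  | du {s : Node} : P.isAssign s → P.DU l V s → CVI P l V s
  | duLV {s t : Node} : CVI P l V t → P.isAssign s → P.DU t (P.refs t) s →
      CVI P l V s
  | cond {c t : Node} : P.G.IsCond c → CVI P l V t →
      ((P.G.STrans c t ∧ ¬ P.G.STrans c l) ∨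
        (∃ e1 e2 : Bool, e1 ≠ e2 ∧ P.G.STC c e1 l ∧ ¬ P.G.STC c e1 t ∧
          P.G.WTC c e2 t)) →
      CVI P l V c

/-- The backward slice `P^B_Υ` for `Υ = ⟨l, V⟩`: the least set of nodes
containing `l`, closed under data dependence (reaching definitions of `V` at
`l` and of the variables referenced at included nodes) and closed under
transitive control dependence of included nodes. -/
inductive BSlice {Node Var : Type} (P : Prog Node Var) (l : Node)
    (V : Set Var) : Node → Prop
  | crit : BSlice P l V l
  | dataCrit {s : Node} : P.DU l V s → BSlice P l V s
  | data {s t : Node} : BSlice P l V t → P.DU t (P.refs t) s → BSlice P l V s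
  | ctrl {c t : Node} : BSlice P l V t → P.G.WTrans c t → BSlice P l V c

theorem STC_to_WTC {Node : Type} {G : CFG Node} {c : Node} {b : Bool} {s : Node}
    (h : G.STC c b s) : G.WTC c b s := by
  induction h with
  | base h => exact CFG.WTC.base (Or.inr h)
  | step h _ ih => exact CFG.WTC.step (Or.inr h) ih

/-- `CVI(Υ)` is contained in the backward slice `P^B_Υ`.  As in the paper, it
is assumed that `MLP(s, l)` is well defined (finite) for every statement in
either set; the proof is by strong induction on `MLP(s, l)`. -/
theorem CVI_subset_backward_slice {Node Var : Type}
    (P : Prog Node Var) (l : Node) (V : Set Var)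
    (hmlp : ∀ s, CVI P l V s ∨ BSlice P l V s → ∃ m, IsMLP P.G s l m) :
    ∀ s, CVI P l V s → BSlice P l V s := by
  intro s hs
  induction hs with
  | skip => exact BSlice.crit
  | du _ h => exact BSlice.dataCrit h
  | duLV _ _ h ih => exact BSlice.data ih h
  | cond _ _ h ih =>
    rcases h with ⟨⟨b, hb⟩, -⟩ | ⟨e1, e2, -, -, -, hw⟩
    · exact BSlice.ctrl ih ⟨b, STC_to_WTC hb⟩
    · exact BSlice.ctrl ih ⟨e2, hw⟩
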